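/- (The closure is closed) Let g : ℕ → ℕ and let B be a set of strings. Then the g-closure C = {τ : B is g-big above τ} of B is g-closed; that is, for every string ρ, if C is g-big above ρ, then ρ ∈ C (equivalently, B is g-big above ρ). -/

import Mathlib

/-!
Let `T` be a finite tree, `g`-bushy above `ρ`, whose leaves lie in the closure, and for each
leaf `τ` of `T` let `S τ` be a finite tree, `g`-bushy above `τ`, whose leaves lie in `B`.
Graft every `S τ` onto `T` at `τ`. The leaves of `T` are pairwise incomparable, so above a leaf
`τ` the grafted tree coincides with `S τ`, while below the leaves it coincides with `T`; hence it
is again `g`-bushy above `ρ` and all of its leaves are leaves of some `S τ`, so lie in `B`.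
-/

def IsTree (T : Set (List ℕ)) : Prop :=
  ∀ σ ∈ T, ∀ τ : List ℕ, τ <+: σ → τ ∈ T

def IsLeaf (T : Set (List ℕ)) (τ : List ℕ) : Prop :=
  τ ∈ T ∧ ∀ a : ℕ, τ ++ [a] ∉ T

def BushyAbove (h : ℕ → ℕ) (σ : List ℕ) (T : Set (List ℕ)) : Prop :=
  IsTree T ∧ σ ∈ T ∧
  (∀ τ ∈ T, τ <+: σ ∨ σ <+: τ) ∧
  (∀ τ ∈ T, σ <+: τ → ¬ IsLeaf T τ → (h τ.length : ℕ∞) ≤ {a : ℕ | τ ++ [a] ∈ T}.encard)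

def BigAbove (h : ℕ → ℕ) (σ : List ℕ) (B : Set (List ℕ)) : Prop :=
  ∃ T : Set (List ℕ), T.Finite ∧ BushyAbove h σ T ∧ ∀ τ, IsLeaf T τ → τ ∈ B

def SmallAbove (h : ℕ → ℕ) (σ : List ℕ) (B : Set (List ℕ)) : Prop :=
  ¬ BigAbove h σ B

variable {h : ℕ → ℕ} {T : Set (List ℕ)} {S : List ℕ → Set (List ℕ)} {ρ σ τ τ' : List ℕ}

theorem IsLeaf.eq_of_prefix (hT : IsTree T) (hτ : IsLeaf T τ) (hσ : σ ∈ T) (hp : τ <+: σ) :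
    τ = σ := by
  obtain ⟨t, rfl⟩ := hp
  cases t with
  | nil => simp
  | cons a t => exact (hτ.2 a (hT _ hσ _ ⟨t, by simp⟩)).elim

theorem IsLeaf.eq_of_prefix_of_prefix (hT : IsTree T) (hτ : IsLeaf T τ) (hτ' : IsLeaf T τ')
    (hp : τ <+: σ) (hp' : τ' <+: σ) : τ = τ' := by
  rcases List.prefix_or_prefix_of_prefix hp hp' with h | h
  · exact hτ.eq_of_prefix hT hτ'.1 h
  · exact (hτ'.eq_of_prefix hT hτ.1 h).symm

theorem BushyAbove.prefix_of_isLeaf (hT : BushyAbove h ρ T) (hτ : IsLeaf T τ) : ρ <+: τ := by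
  rcases hT.2.2.1 τ hτ.1 with hp | hp
  · rw [hτ.eq_of_prefix hT.1 hT.2.1 hp]
  · exact hp

def graft (T : Set (List ℕ)) (S : List ℕ → Set (List ℕ)) : Set (List ℕ) :=
  T ∪ ⋃ τ ∈ {τ | IsLeaf T τ}, S τ

theorem mem_graft : σ ∈ graft T S ↔ σ ∈ T ∨ ∃ τ, IsLeaf T τ ∧ σ ∈ S τ := by
  simp [graft]

theorem Set.Finite.graft (hT : T.Finite) (hS : ∀ τ, IsLeaf T τ → (S τ).Finite) :
    (graft T S).Finite :=
  hT.union ((hT.subset fun _ hτ => hτ.1).biUnion hS)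

theorem isTree_graft (hT : IsTree T) (hS : ∀ τ, IsLeaf T τ → IsTree (S τ)) :
    IsTree (graft T S) := by
  intro σ hσ σ' hp
  rcases mem_graft.1 hσ with hσ | ⟨τ, hτ, hσ⟩
  · exact mem_graft.2 (Or.inl (hT σ hσ σ' hp))
  · exact mem_graft.2 (Or.inr ⟨τ, hτ, hS τ hτ σ hσ σ' hp⟩)

section Graft

variable (hT : IsTree T) (hS : ∀ τ, IsLeaf T τ → BushyAbove h τ (S τ))
include hT hS

theorem mem_graft_iff_of_prefix (hτ : IsLeaf T τ) (hp : τ <+: σ) :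
    σ ∈ graft T S ↔ σ ∈ S τ := by
  refine ⟨fun hσ => ?_, fun hσ => mem_graft.2 (Or.inr ⟨τ, hτ, hσ⟩)⟩
  rcases mem_graft.1 hσ with hσ | ⟨τ', hτ', hσ⟩
  · rw [← hτ.eq_of_prefix hT hσ hp]
    exact (hS τ hτ).2.1
  · obtain rfl : τ = τ' := by
      rcases (hS τ' hτ').2.2.1 σ hσ with hp' | hp'
      · exact hτ.eq_of_prefix hT hτ'.1 (hp.trans hp')
      · exact hτ.eq_of_prefix_of_prefix hT hτ' hp hp'
    exact hσ

theorem isLeaf_graft_iff_of_prefix (hτ : IsLeaf T τ) (hp : τ <+: σ) :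
    IsLeaf (graft T S) σ ↔ IsLeaf (S τ) σ := by
  have hext : ∀ a, σ ++ [a] ∈ graft T S ↔ σ ++ [a] ∈ S τ := fun a =>
    mem_graft_iff_of_prefix hT hS hτ (hp.trans (List.prefix_append σ [a]))
  simp only [IsLeaf, mem_graft_iff_of_prefix hT hS hτ hp, hext]

theorem exists_isLeaf_prefix_or_mem_of_mem_graft (hσ : σ ∈ graft T S) :
    (∃ τ, IsLeaf T τ ∧ τ <+: σ) ∨ (σ ∈ T ∧ ¬ IsLeaf T σ) := by
  by_cases hleaf : ∃ τ, IsLeaf T τ ∧ τ <+: σ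
  · exact Or.inl hleaf
  push Not at hleaf
  have hσT : σ ∈ T := by
    rcases mem_graft.1 hσ with hσ | ⟨τ, hτ, hσ⟩
    · exact hσ
    · rcases (hS τ hτ).2.2.1 σ hσ with hp | hp
      · exact hT τ hτ.1 σ hp
      · exact absurd hp (hleaf τ hτ)
  exact Or.inr ⟨hσT, fun hσl => hleaf σ hσl (List.prefix_refl σ)⟩

theorem exists_isLeaf_of_isLeaf_graft (hσ : IsLeaf (graft T S) σ) :
    ∃ τ, IsLeaf T τ ∧ IsLeaf (S τ) σ := by
  rcases exists_isLeaf_prefix_or_mem_of_mem_graft hT hS hσ.1 with ⟨τ, hτ, hp⟩ | ⟨hσT, hσl⟩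
  · exact ⟨τ, hτ, (isLeaf_graft_iff_of_prefix hT hS hτ hp).1 hσ⟩
  · exact absurd ⟨hσT, fun a ha => hσ.2 a (Or.inl ha)⟩ hσl

end Graft

theorem bushyAbove_graft (hT : BushyAbove h ρ T) (hS : ∀ τ, IsLeaf T τ → BushyAbove h τ (S τ)) :
    BushyAbove h ρ (graft T S) := by
  refine ⟨isTree_graft hT.1 fun τ hτ => (hS τ hτ).1, Or.inl hT.2.1, fun σ hσ => ?_,
    fun σ hσ hρσ hσl => ?_⟩
  · rcases exists_isLeaf_prefix_or_mem_of_mem_graft hT.1 hS hσ with ⟨τ, hτ, hp⟩ | ⟨hσT, -⟩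
    · exact Or.inr ((hT.prefix_of_isLeaf hτ).trans hp)
    · exact hT.2.2.1 σ hσT
  · rcases exists_isLeaf_prefix_or_mem_of_mem_graft hT.1 hS hσ with ⟨τ, hτ, hp⟩ | ⟨hσT, hσTl⟩
    · have hext : {a | σ ++ [a] ∈ graft T S} = {a | σ ++ [a] ∈ S τ} := Set.ext fun a =>
        mem_graft_iff_of_prefix hT.1 hS hτ (hp.trans (List.prefix_append σ [a]))
      rw [hext]
      exact (hS τ hτ).2.2.2 σ ((mem_graft_iff_of_prefix hT.1 hS hτ hp).1 hσ) hp
        (by rwa [← isLeaf_graft_iff_of_prefix hT.1 hS hτ hp])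
    · exact (hT.2.2.2 σ hσT hρσ hσTl).trans (Set.encard_mono fun a ha => Or.inl ha)

/-- The `g`-closure of `B` is `g`-closed: if the closure is `g`-big above `ρ`,
then `ρ` itself is in the closure, i.e. `B` is `g`-big above `ρ`. -/
theorem closure_is_closed (g : ℕ → ℕ) (B : Set (List ℕ)) (ρ : List ℕ)
    (hbig : BigAbove g ρ {τ : List ℕ | BigAbove g τ B}) :
    BigAbove g ρ B := by
  obtain ⟨T, hTfin, hT, hTB⟩ := hbig
  have hleaf : ∀ τ, ∃ S : Set (List ℕ), IsLeaf T τ →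
      S.Finite ∧ BushyAbove g τ S ∧ ∀ σ, IsLeaf S σ → σ ∈ B := by
    intro τ
    by_cases hτ : IsLeaf T τ
    · exact (hTB τ hτ).imp fun _ hS _ => hS
    · exact ⟨∅, fun h => absurd h hτ⟩
  choose S hS using hleaf
  have hSbushy : ∀ τ, IsLeaf T τ → BushyAbove g τ (S τ) := fun τ hτ => (hS τ hτ).2.1
  refine ⟨graft T S, hTfin.graft fun τ hτ => (hS τ hτ).1, bushyAbove_graft hT hSbushy,
    fun σ hσ => ?_⟩
  obtain ⟨τ, hτ, hσ⟩ := exists_isLeaf_of_isLeaf_graft hT.1 hSbushy hσ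
  exact (hS τ hτ).2.2 σ hσ
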